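/- For ν ≥ 1, the series F(s,ν) = Σ_{n=1}^∞ (2n+1) μ_n^{-2s} log((1 + 1/(2μ_n))/(1 − 1/(2μ_n))), where μ_n = √(ν² n(n+1) + 1/4), converges absolutely for Re(s) > 1/2 and defines a holomorphic function there; moreover each summand satisfies log((2μ_n+1)/(2μ_n−1)) = Σ_{k=0}^∞ 2/((2k+1)(2μ_n)^{2k+1}). -/

import Mathlib

/-!
For `a = μ_n > 1/2` one has `(1 + 1/(2a)) / (1 - 1/(2a)) = (2a + 1)/(2a - 1) = 1 + (a - 1/2)⁻¹`,
so the expansion of the logarithm is `Real.hasSum_log_one_add_inv`, and `log (1 + y) ≤ y` bounds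
it by `(a - 1/2)⁻¹ ≤ 2/a` once `a ≥ 1`. Since `μ_n ≥ n + 1`, the `n`-th term is then at most
`6 (n + 1)^(-2 Re s)`: this gives absolute convergence for `Re s > 1/2`, and, being uniform on
every half-plane `Re s > σ > 1/2`, holomorphy of the sum.
-/

open Complex

theorem one_add_inv_sub_half_eq_two_mul_add_one_div {a : ℝ} (ha : a ≠ 1 / 2) :
    1 + (a - 1 / 2)⁻¹ = (2 * a + 1) / (2 * a - 1) := by
  have hb : a - 1 / 2 ≠ 0 := sub_ne_zero.mpr ha
  rw [show 2 * a + 1 = 2 * (a - 1 / 2) + 2 by ring, show 2 * a - 1 = 2 * (a - 1 / 2) by ring]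
  generalize a - 1 / 2 = b at hb ⊢
  field_simp

theorem one_add_inv_sub_half_eq_one_add_div_one_sub {a : ℝ} (h0 : a ≠ 0) (ha : a ≠ 1 / 2) :
    1 + (a - 1 / 2)⁻¹ = (1 + 1 / (2 * a)) / (1 - 1 / (2 * a)) := by
  have : 2 * a - 1 ≠ 0 := fun h => ha (by linarith)
  rw [one_add_inv_sub_half_eq_two_mul_add_one_div ha]
  field_simp

theorem hasSum_log_two_mul_add_one_div_two_mul_sub_one {a : ℝ} (ha : 1 / 2 < a) :
    HasSum (fun k : ℕ => 2 / ((2 * (k : ℝ) + 1) * (2 * a) ^ (2 * k + 1)))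
      (Real.log ((2 * a + 1) / (2 * a - 1))) := by
  have h := Real.hasSum_log_one_add_inv (sub_pos.mpr ha)
  rw [one_add_inv_sub_half_eq_two_mul_add_one_div ha.ne'] at h
  convert h using 2 with k
  rw [show 2 * (a - 1 / 2) + 1 = 2 * a by ring, one_div_pow]
  field_simp

theorem log_one_add_inv_sub_half_le {a : ℝ} (ha : 1 ≤ a) :
    Real.log (1 + (a - 1 / 2)⁻¹) ≤ 2 / a := calc
  Real.log (1 + (a - 1 / 2)⁻¹) ≤ (a - 1 / 2)⁻¹ := by
    have : 0 < (a - 1 / 2)⁻¹ := inv_pos.mpr (by linarith)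
    linarith [Real.log_le_sub_one_of_pos (by positivity : 0 < 1 + (a - 1 / 2)⁻¹)]
  _ ≤ 2 / a := by
    rw [inv_le_iff_one_le_mul₀' (by linarith), mul_div_assoc', le_div_iff₀ (by linarith)]
    linarith

theorem add_one_le_sqrt_sq_mul_add_quarter {ν x : ℝ} (hν : 1 ≤ ν) (hx : -1 ≤ x) :
    x + 1 ≤ Real.sqrt (ν ^ 2 * (x + 1) * (x + 2) + 1 / 4) := by
  apply Real.le_sqrt_of_sq_le
  have h1 : 0 ≤ (x + 1) * (x + 2) := by nlinarith
  nlinarith [mul_le_mul_of_nonneg_right (one_le_pow₀ (n := 2) hν) h1]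

/-- The term of index `n + 1` of `F(s, ν)`, with `a` in place of `μ_{n+1}`. -/
noncomputable def fTerm (a : ℝ) (n : ℕ) (s : ℂ) : ℂ :=
  (2 * ((n : ℂ) + 1) + 1) * (a : ℂ) ^ (-2 * s) *
    ((Real.log ((1 + 1 / (2 * a)) / (1 - 1 / (2 * a))) : ℝ) : ℂ)

theorem differentiable_fTerm {a : ℝ} (ha : a ≠ 0) (n : ℕ) : Differentiable ℂ (fTerm a n) :=
  ((differentiable_id.const_mul _).const_cpow (.inl (ofReal_ne_zero.mpr ha))).const_mul _
    |>.mul_const _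

theorem norm_fTerm_le {a : ℝ} {n : ℕ} (hn : (n : ℝ) + 1 ≤ a) (s : ℂ) :
    ‖fTerm a n s‖ ≤ 6 * a ^ (-2 * s.re) := by
  have ha : 1 ≤ a := by linarith [n.cast_nonneg (α := ℝ)]
  have ha0 : 0 < a := by linarith
  rw [fTerm, ← one_add_inv_sub_half_eq_one_add_div_one_sub ha0.ne' (by linarith)]
  have hlog_nonneg : 0 ≤ Real.log (1 + (a - 1 / 2)⁻¹) :=
    Real.log_nonneg (le_add_of_nonneg_right (inv_nonneg.mpr (by linarith)))
  have hcoeff : ‖2 * ((n : ℂ) + 1) + 1‖ ≤ 3 * a := by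
    rw [show 2 * ((n : ℂ) + 1) + 1 = ((2 * n + 3 : ℝ) : ℂ) by push_cast; ring, norm_real,
      Real.norm_of_nonneg (by positivity)]
    linarith
  have hpow : ‖(a : ℂ) ^ (-2 * s)‖ = a ^ (-2 * s.re) := by
    rw [norm_cpow_eq_rpow_re_of_pos ha0]
    simp
  calc ‖(2 * ((n : ℂ) + 1) + 1) * (a : ℂ) ^ (-2 * s) * ((Real.log (1 + (a - 1 / 2)⁻¹) : ℝ) : ℂ)‖
      = ‖2 * ((n : ℂ) + 1) + 1‖ * a ^ (-2 * s.re) * Real.log (1 + (a - 1 / 2)⁻¹) := by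
        rw [norm_mul, norm_mul, hpow, norm_real, Real.norm_of_nonneg hlog_nonneg]
    _ ≤ 3 * a * a ^ (-2 * s.re) * (2 / a) := by
        gcongr
        exact log_one_add_inv_sub_half_le ha
    _ = 6 * a ^ (-2 * s.re) := by
        field_simp
        ring

theorem norm_fTerm_le_rpow {a : ℝ} {n : ℕ} (hn : (n : ℝ) + 1 ≤ a) {σ : ℝ} (hσ : 0 ≤ σ) {s : ℂ}
    (hs : σ ≤ s.re) : ‖fTerm a n s‖ ≤ 6 * ((n : ℝ) + 1) ^ (-2 * σ) := by
  refine (norm_fTerm_le hn s).trans ?_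
  have h1 : (1 : ℝ) ≤ n + 1 := by linarith [n.cast_nonneg (α := ℝ)]
  gcongr 6 * ?_
  calc a ^ (-2 * s.re) ≤ ((n : ℝ) + 1) ^ (-2 * s.re) :=
        Real.rpow_le_rpow_of_nonpos (by positivity) hn (by linarith)
    _ ≤ ((n : ℝ) + 1) ^ (-2 * σ) := Real.rpow_le_rpow_of_exponent_le h1 (by linarith)

theorem summable_nat_add_one_rpow {p : ℝ} (hp : p < -1) :
    Summable fun n : ℕ => ((n : ℝ) + 1) ^ p := by
  simpa using (summable_nat_add_iff 1).mpr (Real.summable_nat_rpow.mpr hp)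

variable {μ : ℕ → ℝ}

theorem summable_norm_fTerm (hμ : ∀ n : ℕ, (n : ℝ) + 1 ≤ μ n) {s : ℂ} (hs : 1 / 2 < s.re) :
    Summable fun n => ‖fTerm (μ n) n s‖ :=
  .of_nonneg_of_le (fun _ => norm_nonneg _)
    (fun n => norm_fTerm_le_rpow (hμ n) (by linarith) le_rfl)
    ((summable_nat_add_one_rpow (by linarith)).mul_left 6)

theorem differentiableOn_tsum_fTerm (hμ : ∀ n : ℕ, (n : ℝ) + 1 ≤ μ n) :
    DifferentiableOn ℂ (fun s => ∑' n, fTerm (μ n) n s) {s | 1 / 2 < s.re} := by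
  intro s (hs : 1 / 2 < s.re)
  obtain ⟨σ, hσ, hσs⟩ := exists_between hs
  have hU : IsOpen {w : ℂ | σ < w.re} := isOpen_lt continuous_const continuous_re
  have hdiff : DifferentiableOn ℂ (fun s => ∑' n, fTerm (μ n) n s) {w | σ < w.re} :=
    differentiableOn_tsum_of_summable_norm ((summable_nat_add_one_rpow (by linarith)).mul_left 6)
      (fun n => (differentiable_fTerm (by linarith [hμ n, n.cast_nonneg (α := ℝ)]) n)
        |>.differentiableOn)
      hU (fun n w hw => norm_fTerm_le_rpow (hμ n) (by linarith) (le_of_lt hw))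
  exact (hdiff.differentiableAt (hU.mem_nhds hσs)).differentiableWithinAt

/-- For `ν ≥ 1` and `μ_n = √(ν² n(n+1) + 1/4)` (`n ≥ 1`), the series
`F(s,ν) = Σ_{n≥1} (2n+1) μ_n^{-2s} log((1 + 1/(2μ_n))/(1 - 1/(2μ_n)))` converges
absolutely for `Re s > 1/2` and is holomorphic there; each summand satisfies
`log((2μ_n+1)/(2μ_n-1)) = Σ_{k≥0} 2/((2k+1)(2μ_n)^{2k+1})`. -/
theorem F_series_convergence (ν : ℝ) (hν : 1 ≤ ν) (μ : ℕ → ℝ)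
    (hμ : ∀ n : ℕ, μ n = Real.sqrt (ν^2 * (n+1) * (n+2) + 1/4)) :
    (∀ s : ℂ, 1/2 < s.re → Summable (fun n : ℕ =>
      ‖(2*((n:ℂ)+1)+1) * ((μ n : ℂ)) ^ (-2*s) *
        ((Real.log ((1 + 1/(2*μ n))/(1 - 1/(2*μ n))) : ℝ) : ℂ)‖)) ∧
    DifferentiableOn ℂ (fun s : ℂ => ∑' n : ℕ,
      (2*((n:ℂ)+1)+1) * ((μ n : ℂ)) ^ (-2*s) *
        ((Real.log ((1 + 1/(2*μ n))/(1 - 1/(2*μ n))) : ℝ) : ℂ))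
      {s : ℂ | 1/2 < s.re} ∧
    (∀ n : ℕ, Real.log ((2*μ n + 1)/(2*μ n - 1)) =
      ∑' k : ℕ, 2/((2*(k:ℝ)+1) * (2*μ n)^(2*k+1))) := by
  have hμ_ge : ∀ n : ℕ, (n : ℝ) + 1 ≤ μ n := fun n => by
    rw [hμ n]
    exact add_one_le_sqrt_sq_mul_add_quarter hν (by linarith [n.cast_nonneg (α := ℝ)])
  refine ⟨fun s hs => summable_norm_fTerm hμ_ge hs, differentiableOn_tsum_fTerm hμ_ge, fun n => ?_⟩
  have hμ_half : 1 / 2 < μ n := by linarith [hμ_ge n, n.cast_nonneg (α := ℝ)]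
  exact (hasSum_log_two_mul_add_one_div_two_mul_sub_one hμ_half).tsum_eq.symm
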